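/- Let H be an n-vertex C5-free 3-graph with δ2^+(H) ≥ n/2 containing a K4 on vi, vj, vk, vl, and let A_i = N(vj,vk) ∩ N(vk,vl) ∩ N(vl,vj) and A_j = N(vi,vk) ∩ N(vk,vl) ∩ N(vl,vi). Then for every a ∈ A_i and b ∈ A_j, N(a,b) = N(vi,vj). -/
import Mathlib


open Finset

/-- The link (co-neighborhood) of the pair `{u,v}`: all `w` with `{u,v,w}` an edge. -/
def link {n : ℕ} (E : Finset (Finset (Fin n))) (u v : Fin n) : Finset (Fin n) :=
  Finset.univ.filter (fun w => ({u, v, w} : Finset (Fin n)) ∈ E)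

/-- `E` is the edge set of a 3-graph: every edge has exactly 3 vertices. -/
def isEdgeSet {n : ℕ} (E : Finset (Finset (Fin n))) : Prop := ∀ e ∈ E, e.card = 3

/-- `E` contains a copy of `C5⁻ = {abc, bcd, cde, dea}`. -/
def hasC5minus {n : ℕ} (E : Finset (Finset (Fin n))) : Prop :=
  ∃ a b c d e : Fin n,
    a ≠ b ∧ a ≠ c ∧ a ≠ d ∧ a ≠ e ∧ b ≠ c ∧ b ≠ d ∧ b ≠ e ∧ c ≠ d ∧ c ≠ e ∧ d ≠ e ∧
    ({a, b, c} : Finset (Fin n)) ∈ E ∧ ({b, c, d} : Finset (Fin n)) ∈ E ∧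
    ({c, d, e} : Finset (Fin n)) ∈ E ∧ ({d, e, a} : Finset (Fin n)) ∈ E

/-- `E` contains a copy of `C5 = {abc, bcd, cde, dea, eab}`. -/
def hasC5 {n : ℕ} (E : Finset (Finset (Fin n))) : Prop :=
  ∃ a b c d e : Fin n,
    a ≠ b ∧ a ≠ c ∧ a ≠ d ∧ a ≠ e ∧ b ≠ c ∧ b ≠ d ∧ b ≠ e ∧ c ≠ d ∧ c ≠ e ∧ d ≠ e ∧
    ({a, b, c} : Finset (Fin n)) ∈ E ∧ ({b, c, d} : Finset (Fin n)) ∈ E ∧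
    ({c, d, e} : Finset (Fin n)) ∈ E ∧ ({d, e, a} : Finset (Fin n)) ∈ E ∧
    ({e, a, b} : Finset (Fin n)) ∈ E

/-- `a, b, c, d` form a `K4` in `E`: all four triples among them are edges. -/
def isK4 {n : ℕ} (E : Finset (Finset (Fin n))) (a b c d : Fin n) : Prop :=
  a ≠ b ∧ a ≠ c ∧ a ≠ d ∧ b ≠ c ∧ b ≠ d ∧ c ≠ d ∧
  ({a, b, c} : Finset (Fin n)) ∈ E ∧ ({a, b, d} : Finset (Fin n)) ∈ E ∧
  ({a, c, d} : Finset (Fin n)) ∈ E ∧ ({b, c, d} : Finset (Fin n)) ∈ E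

/-- `E` contains a copy of `K4⁻ = {abc, abd, acd}`. -/
def hasK4minus {n : ℕ} (E : Finset (Finset (Fin n))) : Prop :=
  ∃ a b c d : Fin n, a ≠ b ∧ a ≠ c ∧ a ≠ d ∧ b ≠ c ∧ b ≠ d ∧ c ≠ d ∧
    ({a, b, c} : Finset (Fin n)) ∈ E ∧ ({a, b, d} : Finset (Fin n)) ∈ E ∧
    ({a, c, d} : Finset (Fin n)) ∈ E

/-- `A`-set of a `K4`: intersection of the three pairwise links of `{x, y, z}`
(the set `A_w` for the fourth vertex `w` of the `K4`). -/
def Aset {n : ℕ} (E : Finset (Finset (Fin n))) (x y z : Fin n) : Finset (Fin n) :=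
  link E x y ∩ link E y z ∩ link E z x

/-- `B`-set of a `K4`: `B_w = N(w,x) ∩ N(w,y) ∩ N(w,z)`. -/
def Bset {n : ℕ} (E : Finset (Finset (Fin n))) (w x y z : Fin n) : Finset (Fin n) :=
  link E w x ∩ link E w y ∩ link E w z

set_option maxHeartbeats 1600000

variable {n : ℕ} {E : Finset (Finset (Fin n))}

lemma mem_link {u v w : Fin n} : w ∈ link E u v ↔ ({u,v,w} : Finset (Fin n)) ∈ E := by
  simp [link]

lemma epm {x y z x' y' z' : Fin n}
    (h : ({x,y,z} : Finset (Fin n)) ∈ E)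
    (hperm : ∀ a : Fin n, (a = x' ∨ a = y' ∨ a = z') ↔ (a = x ∨ a = y ∨ a = z)) :
    ({x',y',z'} : Finset (Fin n)) ∈ E := by
  have he : ({x',y',z'} : Finset (Fin n)) = {x,y,z} := by
    ext a; simp only [mem_insert, mem_singleton]; exact hperm a
  rwa [he]

lemma three_distinct (hE : isEdgeSet E) {x y t : Fin n}
    (h : ({x,y,t} : Finset (Fin n)) ∈ E) : x ≠ y ∧ x ≠ t ∧ y ≠ t := by
  have h3 := hE _ h
  refine ⟨?_, ?_, ?_⟩ <;> rintro rfl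
  · have he : ({x,x,t} : Finset (Fin n)) = {x,t} := by simp
    rw [he] at h3
    have := Finset.card_insert_le x ({t} : Finset (Fin n))
    simp at this; omega
  · have he : ({x,y,x} : Finset (Fin n)) = {x,y} := by ext a; simp; tauto
    rw [he] at h3
    have := Finset.card_insert_le x ({y} : Finset (Fin n))
    simp at this; omega
  · have he : ({x,y,y} : Finset (Fin n)) = {x,y} := by simp
    rw [he] at h3
    have := Finset.card_insert_le x ({y} : Finset (Fin n))
    simp at this; omega

lemma no_path (hE : isEdgeSet E) (hC5 : ¬ hasC5 E) {x y z u t : Fin n}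
    (hxy : x ≠ y) (hxz : x ≠ z) (hxu : x ≠ u) (hyz : y ≠ z) (hyu : y ≠ u) (hzu : z ≠ u)
    (h1 : ({x,y,t} : Finset (Fin n)) ∈ E)
    (h2 : ({y,z,t} : Finset (Fin n)) ∈ E)
    (h3 : ({z,u,t} : Finset (Fin n)) ∈ E)
    (h4 : ({z,u,x} : Finset (Fin n)) ∈ E)
    (h5 : ({u,x,y} : Finset (Fin n)) ∈ E) : False := by
  obtain ⟨-, hxt, hyt⟩ := three_distinct hE h1
  obtain ⟨-, -, hzt⟩ := three_distinct hE h2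
  obtain ⟨-, -, hut⟩ := three_distinct hE h3
  exact hC5 ⟨x, y, t, z, u, hxy, hxt, hxz, hxu, hyt, hyz, hyu, hzt.symm, hut.symm, hzu,
    h1, epm h2 (by tauto), epm h3 (by tauto), h4, h5⟩

lemma six_le_three (A B C D E' F : Prop)
    [Decidable A] [Decidable B] [Decidable C] [Decidable D] [Decidable E'] [Decidable F]
    (hADF : ¬(A∧D∧F)) (hAEF : ¬(A∧E'∧F)) (hBDE : ¬(B∧D∧E')) (hBEF : ¬(B∧E'∧F))
    (hCDE : ¬(C∧D∧E')) (hCDF : ¬(C∧D∧F)) (hACF : ¬(A∧C∧F)) (hABF : ¬(A∧B∧F))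
    (hABE : ¬(A∧B∧E')) (hBCE : ¬(B∧C∧E')) (hACD : ¬(A∧C∧D)) (hBCD : ¬(B∧C∧D)) :
    (if A then 1 else 0) + (if B then 1 else 0) + (if C then 1 else 0)
      + (if D then 1 else 0) + (if E' then 1 else 0) + (if F then 1 else 0) ≤ 3 := by
  by_cases hA : A <;> by_cases hB : B <;> by_cases hC : C <;> by_cases hD : D
    <;> by_cases hE' : E' <;> by_cases hF : F <;> simp_all

lemma six_le_two (A B C D E' F : Prop)
    [Decidable A] [Decidable B] [Decidable C] [Decidable D] [Decidable E'] [Decidable F]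
    (hA : A) (hF : F)
    (hADF : ¬(A∧D∧F)) (hAEF : ¬(A∧E'∧F)) (hACF : ¬(A∧C∧F)) (hABF : ¬(A∧B∧F)) :
    (if A then 1 else 0) + (if B then 1 else 0) + (if C then 1 else 0)
      + (if D then 1 else 0) + (if E' then 1 else 0) + (if F then 1 else 0) ≤ 2 := by
  by_cases hB : B <;> by_cases hC : C <;> by_cases hD : D <;> by_cases hE' : E'
    <;> simp_all

lemma card_eq_sum_ind (s : Finset (Fin n)) :
    ∑ t : Fin n, (if t ∈ s then (1:ℕ) else 0) = s.card := by
  rw [Finset.sum_boole]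
  simp [Finset.filter_mem_eq_inter]

lemma opp_iff (hE : isEdgeSet E) (hC5 : ¬ hasC5 E)
    (hdeg : ∀ u v : Fin n, (link E u v).Nonempty → n ≤ 2 * (link E u v).card)
    {p q r s : Fin n} (hK : isK4 E p q r s) :
    ∀ w : Fin n, w ∈ link E p q ↔ w ∉ link E r s := by
  obtain ⟨hpq, hpr, hps, hqr, hqs, hrs, e1, e2, e3, e4⟩ := hK
  -- the twelve "no 3-edge path" constraints
  have cADF : ∀ t : Fin n, ¬(t ∈ link E p q ∧ t ∈ link E q r ∧ t ∈ link E r s) := by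
    rintro t ⟨m1, m2, m3⟩; rw [mem_link] at m1 m2 m3
    exact no_path hE hC5 hpq hpr hps hqr hqs hrs m1 m2 m3
      (epm e3 (by tauto)) (epm e2 (by tauto))
  have cAEF : ∀ t : Fin n, ¬(t ∈ link E p q ∧ t ∈ link E q s ∧ t ∈ link E r s) := by
    rintro t ⟨m1, m2, m3⟩; rw [mem_link] at m1 m2 m3
    exact no_path hE hC5 hpq hps hpr hqs hqr hrs.symm m1 m2 (epm m3 (by tauto))
      (epm e3 (by tauto)) (epm e1 (by tauto))
  have cBDE : ∀ t : Fin n, ¬(t ∈ link E p r ∧ t ∈ link E q r ∧ t ∈ link E q s) := by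
    rintro t ⟨m1, m2, m3⟩; rw [mem_link] at m1 m2 m3
    exact no_path hE hC5 hpr hpq hps hqr.symm hrs hqs m1 (epm m2 (by tauto)) m3
      (epm e2 (by tauto)) (epm e3 (by tauto))
  have cBEF : ∀ t : Fin n, ¬(t ∈ link E p r ∧ t ∈ link E q s ∧ t ∈ link E r s) := by
    rintro t ⟨m1, m2, m3⟩; rw [mem_link] at m1 m2 m3
    exact no_path hE hC5 hpr hps hpq hrs hqr.symm hqs.symm m1 m3 (epm m2 (by tauto))
      (epm e2 (by tauto)) (epm e1 (by tauto))
  have cCDE : ∀ t : Fin n, ¬(t ∈ link E p s ∧ t ∈ link E q r ∧ t ∈ link E q s) := by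
    rintro t ⟨m1, m2, m3⟩; rw [mem_link] at m1 m2 m3
    exact no_path hE hC5 hps hpq hpr hqs.symm hrs.symm hqr m1 (epm m3 (by tauto)) m2
      (epm e1 (by tauto)) (epm e3 (by tauto))
  have cCDF : ∀ t : Fin n, ¬(t ∈ link E p s ∧ t ∈ link E q r ∧ t ∈ link E r s) := by
    rintro t ⟨m1, m2, m3⟩; rw [mem_link] at m1 m2 m3
    exact no_path hE hC5 hps hpr hpq hrs.symm hqs.symm hqr.symm m1 (epm m3 (by tauto))
      (epm m2 (by tauto)) (epm e1 (by tauto)) (epm e2 (by tauto))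
  have cACF : ∀ t : Fin n, ¬(t ∈ link E p q ∧ t ∈ link E p s ∧ t ∈ link E r s) := by
    rintro t ⟨m1, m2, m3⟩; rw [mem_link] at m1 m2 m3
    exact no_path hE hC5 hpq.symm hqs hqr hps hpr hrs.symm (epm m1 (by tauto)) m2
      (epm m3 (by tauto)) (epm e4 (by tauto)) (epm e1 (by tauto))
  have cABF : ∀ t : Fin n, ¬(t ∈ link E p q ∧ t ∈ link E p r ∧ t ∈ link E r s) := by
    rintro t ⟨m1, m2, m3⟩; rw [mem_link] at m1 m2 m3
    exact no_path hE hC5 hpq.symm hqr hqs hpr hps hrs (epm m1 (by tauto)) m2 m3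
      (epm e4 (by tauto)) (epm e2 (by tauto))
  have cABE : ∀ t : Fin n, ¬(t ∈ link E p q ∧ t ∈ link E p r ∧ t ∈ link E q s) := by
    rintro t ⟨m1, m2, m3⟩; rw [mem_link] at m1 m2 m3
    exact no_path hE hC5 hpr.symm hqr.symm hrs hpq hps hqs (epm m2 (by tauto)) m1 m3
      (epm e4 (by tauto)) (epm e3 (by tauto))
  have cBCE : ∀ t : Fin n, ¬(t ∈ link E p r ∧ t ∈ link E p s ∧ t ∈ link E q s) := by
    rintro t ⟨m1, m2, m3⟩; rw [mem_link] at m1 m2 m3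
    exact no_path hE hC5 hpr.symm hrs hqr.symm hps hpq hqs.symm (epm m1 (by tauto)) m2
      (epm m3 (by tauto)) (epm e4 (by tauto)) (epm e1 (by tauto))
  have cACD : ∀ t : Fin n, ¬(t ∈ link E p q ∧ t ∈ link E p s ∧ t ∈ link E q r) := by
    rintro t ⟨m1, m2, m3⟩; rw [mem_link] at m1 m2 m3
    exact no_path hE hC5 hps.symm hqs.symm hrs.symm hpq hpr hqr (epm m2 (by tauto)) m1 m3
      e4 (epm e3 (by tauto))
  have cBCD : ∀ t : Fin n, ¬(t ∈ link E p r ∧ t ∈ link E p s ∧ t ∈ link E q r) := by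
    rintro t ⟨m1, m2, m3⟩; rw [mem_link] at m1 m2 m3
    exact no_path hE hC5 hps.symm hrs.symm hqs.symm hpr hpq hqr.symm (epm m2 (by tauto)) m1
      (epm m3 (by tauto)) (epm e4 (by tauto)) (epm e2 (by tauto))
  -- disjointness of the opposite links pq and rs
  have disj : ∀ w : Fin n, ¬(w ∈ link E p q ∧ w ∈ link E r s) := by
    rintro w ⟨hw1, hw2⟩
    set f : Fin n → ℕ := fun t =>
      (if t ∈ link E p q then 1 else 0) + (if t ∈ link E p r then 1 else 0)
        + (if t ∈ link E p s then 1 else 0) + (if t ∈ link E q r then 1 else 0)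
        + (if t ∈ link E q s then 1 else 0) + (if t ∈ link E r s then 1 else 0) with hf
    have bound3 : ∀ t : Fin n, f t ≤ 3 := fun t =>
      six_le_three _ _ _ _ _ _ (cADF t) (cAEF t) (cBDE t) (cBEF t) (cCDE t) (cCDF t)
        (cACF t) (cABF t) (cABE t) (cBCE t) (cACD t) (cBCD t)
    have boundw : f w ≤ 2 :=
      six_le_two _ _ _ _ _ _ hw1 hw2 (cADF w) (cAEF w) (cACF w) (cABF w)
    have hsum : ∑ t : Fin n, f t
        = (link E p q).card + (link E p r).card + (link E p s).card
          + (link E q r).card + (link E q s).card + (link E r s).card := by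
      simp only [hf, Finset.sum_add_distrib, card_eq_sum_ind]
    have hsplit : f w + ∑ t ∈ (univ : Finset (Fin n)).erase w, f t = ∑ t : Fin n, f t :=
      Finset.add_sum_erase _ f (mem_univ w)
    have herase : ∑ t ∈ (univ : Finset (Fin n)).erase w, f t ≤ 3 * (n - 1) := by
      calc ∑ t ∈ (univ : Finset (Fin n)).erase w, f t
          ≤ ((univ : Finset (Fin n)).erase w).card • 3 :=
            Finset.sum_le_card_nsmul _ _ _ (fun t _ => bound3 t)
        _ = 3 * (n - 1) := by
            rw [Finset.card_erase_of_mem (mem_univ w)]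
            simp [mul_comm]
    have n1 : n ≤ 2 * (link E p q).card := hdeg p q ⟨r, mem_link.2 e1⟩
    have n2 : n ≤ 2 * (link E p r).card := hdeg p r ⟨q, mem_link.2 (epm e1 (by tauto))⟩
    have n3 : n ≤ 2 * (link E p s).card := hdeg p s ⟨q, mem_link.2 (epm e2 (by tauto))⟩
    have n4 : n ≤ 2 * (link E q r).card := hdeg q r ⟨p, mem_link.2 (epm e1 (by tauto))⟩
    have n5 : n ≤ 2 * (link E q s).card := hdeg q s ⟨p, mem_link.2 (epm e2 (by tauto))⟩
    have n6 : n ≤ 2 * (link E r s).card := hdeg r s ⟨p, mem_link.2 (epm e3 (by tauto))⟩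
    have hn : 1 ≤ n := by
      rcases Nat.eq_zero_or_pos n with h | h
      · exact absurd (h ▸ w).isLt (by omega)
      · exact h
    omega
  -- the two links cover everything
  have cover : link E p q ∪ link E r s = univ := by
    have hdisj : Disjoint (link E p q) (link E r s) :=
      Finset.disjoint_left.2 fun {t} h1 h2 => disj t ⟨h1, h2⟩
    have hc : (link E p q ∪ link E r s).card = (link E p q).card + (link E r s).card :=
      Finset.card_union_of_disjoint hdisj
    have n1 : n ≤ 2 * (link E p q).card := hdeg p q ⟨r, mem_link.2 e1⟩
    have n6 : n ≤ 2 * (link E r s).card := hdeg r s ⟨p, mem_link.2 (epm e3 (by tauto))⟩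
    have hle : (link E p q ∪ link E r s).card ≤ n := by
      have := Finset.card_le_univ (link E p q ∪ link E r s)
      simpa using this
    apply Finset.eq_univ_of_card
    have : n ≤ (link E p q ∪ link E r s).card := by omega
    have : (link E p q ∪ link E r s).card = n := le_antisymm hle this
    simpa using this
  intro w
  constructor
  · intro h1 h2; exact disj w ⟨h1, h2⟩
  · intro h2
    have : w ∈ link E p q ∪ link E r s := cover ▸ mem_univ w
    rcases Finset.mem_union.1 this with h | h
    · exact h
    · exact absurd h h2

/-- Fact 3: if `a ∈ A_i` and `b ∈ A_j`, then `N(a,b) = N(vi,vj)`. -/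
theorem stmt_9 (n : ℕ) (E : Finset (Finset (Fin n))) (hE : isEdgeSet E)
    (hC5free : ¬ hasC5 E)
    (hdeg : ∀ u v : Fin n, (link E u v).Nonempty → n ≤ 2 * (link E u v).card)
    (vi vj vk vl : Fin n) (hK4 : isK4 E vi vj vk vl)
    (a b : Fin n) (ha : a ∈ Aset E vj vk vl) (hb : b ∈ Aset E vi vk vl) :
    link E a b = link E vi vj := by
  obtain ⟨hij, hik, hil, hjk, hjl, hkl, e1, e2, e3, e4⟩ := hK4
  rw [Aset, Finset.mem_inter, Finset.mem_inter] at ha hb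
  obtain ⟨⟨ha1, ha2⟩, ha3⟩ := ha
  obtain ⟨⟨hb1, hb2⟩, hb3⟩ := hb
  rw [mem_link] at ha1 ha2 ha3 hb1 hb2 hb3
  obtain ⟨-, hja, hka⟩ := three_distinct hE ha1
  obtain ⟨-, hla, -⟩ := three_distinct hE ha3
  obtain ⟨-, hib, hkb⟩ := three_distinct hE hb1
  obtain ⟨-, hlb, -⟩ := three_distinct hE hb3
  have K1 : isK4 E vi vk vj vl := ⟨hik, hij, hil, hjk.symm, hkl, hjl,
    epm e1 (by tauto), e3, e2, epm e4 (by tauto)⟩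
  have K2 : isK4 E a vk vj vl := ⟨hka.symm, hja.symm, hla.symm, hjk.symm, hkl, hjl,
    epm ha1 (by tauto), epm ha2 (by tauto), epm ha3 (by tauto), epm e4 (by tauto)⟩
  have K3 : isK4 E vi vl vj vk := ⟨hil, hij, hik, hjl.symm, hkl.symm, hjk,
    epm e2 (by tauto), epm e3 (by tauto), e1, epm e4 (by tauto)⟩
  have K4b : isK4 E a vl vj vk := ⟨hla.symm, hja.symm, hka.symm, hjl.symm, hkl.symm, hjk,
    epm ha3 (by tauto), epm ha2 (by tauto), epm ha1 (by tauto), epm e4 (by tauto)⟩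
  have o1 := opp_iff hE hC5free hdeg K1
  have o2 := opp_iff hE hC5free hdeg K2
  have o3 := opp_iff hE hC5free hdeg K3
  have o4 := opp_iff hE hC5free hdeg K4b
  have hbak : b ∈ link E a vk := (o2 b).2 ((o1 b).1 (mem_link.2 hb1))
  have eabk : ({a, vk, b} : Finset (Fin n)) ∈ E := mem_link.1 hbak
  have hbal : b ∈ link E a vl := (o4 b).2 ((o3 b).1 (mem_link.2 (epm hb3 (by tauto))))
  have eabl : ({a, vl, b} : Finset (Fin n)) ∈ E := mem_link.1 hbal
  have hab : a ≠ b := (three_distinct hE eabk).2.1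
  have K5 : isK4 E a b vk vl := ⟨hab, hka.symm, hla.symm, hkb.symm, hlb.symm, hkl,
    epm eabk (by tauto), epm eabl (by tauto), epm ha2 (by tauto), epm hb2 (by tauto)⟩
  have K6 : isK4 E vi vj vk vl := ⟨hij, hik, hil, hjk, hjl, hkl, e1, e2, e3, e4⟩
  have o5 := opp_iff hE hC5free hdeg K5
  have o6 := opp_iff hE hC5free hdeg K6
  ext w
  exact (o5 w).trans (o6 w).symm
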